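/- Let ϑ ∈ I and let ζ be the unique fluid model solution with initial measure ϑ. Then ζ_+(t)(C_x) = 0 for all x ∈ [0,∞)² and all t ≥ 0, where ζ_+(t) = Σ_{k=1}^K ζ_k(t). -/

import Mathlib

/-!
The mass `ϑ_k((C_x)_t)` carried over from time `0` vanishes by (I.1). Mass entering at time `s`
sits at `(w(s), p)` with `p ∼ Γ_k`, so it charges the horizontal edge of `C_x` only through an
atom of `Γ_k`, and the vertical edge only when `w(s) + s = t + x₁`. The map `s ↦ w(s) + s` is
nondecreasing with density `Σ_k ρ_k G_k(w(s))`, so on a level set of positive measure all `G_k`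
vanish at some `w(u) < w(a)`, `a` in the level set. By (I.3), `w(0) ≤ w(u)`, and above such a
level the workload decreases at unit rate, so it can never reach `w(a)`.
-/

open MeasureTheory Set Filter Topology
open scoped ENNReal

noncomputable section

namespace OverloadedFIFO

/-- The complement `G(x) = Γ((x, ∞))` of the cumulative distribution function of `Γ`. -/
def Gk (Γ : MeasureTheory.Measure ℝ) (x : ℝ) : ℝ := (Γ (Set.Ioi x)).toReal

/-- Model data: `K` job classes with arrival rates `lam`, service rates `mu`, and
deadline (patience) distributions `Γ`, in the overloaded regime `ρ > 1`.  Each `Γ k` is a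
Borel probability measure on `[0,∞)` (no mass on negatives), with continuous c.d.f.
(no atoms, in particular `Γ k {0} = 0`) and finite mean. -/
structure Data (K : ℕ) where
  lam : Fin K → ℝ
  mu : Fin K → ℝ
  Γ : Fin K → MeasureTheory.Measure ℝ
  lam_pos : ∀ k, 0 < lam k
  mu_pos : ∀ k, 0 < mu k
  Γ_prob : ∀ k, MeasureTheory.IsProbabilityMeasure (Γ k)
  Γ_null_neg : ∀ k, Γ k (Set.Iio 0) = 0
  Γ_noAtom : ∀ k, ∀ x : ℝ, Γ k {x} = 0
  Γ_finite_mean : ∀ k, MeasureTheory.Integrable id (Γ k)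
  rho_gt_one : 1 < ∑ k, lam k / mu k

instance {K : ℕ} (D : Data K) (k : Fin K) : IsProbabilityMeasure (D.Γ k) := D.Γ_prob k

/-- `ρ_k = λ_k / μ_k`. -/
def Data.rho {K : ℕ} (D : Data K) (k : Fin K) : ℝ := D.lam k / D.mu k

/-- `ρ = Σ_k ρ_k`. -/
def Data.rhoTot {K : ℕ} (D : Data K) : ℝ := ∑ k, D.rho k

/-- A workload fluid model solution: a nonnegative function `w` on `[0,∞)` satisfying
`w(t) = w(0) + Σ_k ρ_k ∫_0^t G_k(w(s)) ds − t` for all `t ≥ 0`. -/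
def IsWorkloadSol {K : ℕ} (D : Data K) (w : ℝ → ℝ) : Prop :=
  (∀ t : ℝ, 0 ≤ t → 0 ≤ w t) ∧
  (∀ k : Fin K, ∀ t : ℝ, 0 ≤ t →
    IntervalIntegrable (fun s => Gk (D.Γ k) (w s)) volume 0 t) ∧
  (∀ t : ℝ, 0 ≤ t →
    w t = w 0 + (∑ k, D.rho k * ∫ s in (0:ℝ)..t, Gk (D.Γ k) (w s)) - t)

/-- `w_l = sup {u ≥ 0 : Σ_k ρ_k G_k(u) > 1}`. -/
def wl {K : ℕ} (D : Data K) : ℝ :=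
  sSup {u : ℝ | 0 ≤ u ∧ 1 < ∑ k, D.rho k * Gk (D.Γ k) u}

/-- `w_u = sup {u ≥ 0 : Σ_k ρ_k G_k(u) ≥ 1}`. -/
def wu {K : ℕ} (D : Data K) : ℝ :=
  sSup {u : ℝ | 0 ≤ u ∧ 1 ≤ ∑ k, D.rho k * Gk (D.Γ k) u}

/-- `d_max = max_k sup {x ≥ 0 : G_k(x) > 0} ∈ (0,∞]`, as an extended nonnegative real. -/
def dmax {K : ℕ} (D : Data K) : ℝ≥0∞ :=
  ⨆ k, sSup (ENNReal.ofReal '' {x : ℝ | 0 ≤ x ∧ 0 < Gk (D.Γ k) x})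

/-- `τ(t) = inf {s ∈ [0,t] : w(s) + s ≥ t}`. -/
def tauF (w : ℝ → ℝ) (t : ℝ) : ℝ := sInf {s : ℝ | 0 ≤ s ∧ s ≤ t ∧ t ≤ w s + s}

/-- The nonnegative quadrant `[0,∞)²`. -/
def Q : Set (ℝ × ℝ) := {p | 0 ≤ p.1 ∧ 0 ≤ p.2}

/-- The shift `B_x = {y ∈ [0,∞)² : y − x ∈ B}` of a set `B ⊆ [0,∞)²`. -/
def shift (B : Set (ℝ × ℝ)) (x : ℝ × ℝ) : Set (ℝ × ℝ) :=
  {y | y ∈ Q ∧ (y.1 - x.1, y.2 - x.2) ∈ B}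

/-- Diagonal shift `B_t = B_{(t,t)}`. -/
def shiftd (B : Set (ℝ × ℝ)) (t : ℝ) : Set (ℝ × ℝ) := shift B (t, t)

/-- The set `C = ([0,∞)×{0}) ∪ ({0}×[0,∞))`. -/
def Cset : Set (ℝ × ℝ) := {p | (0 ≤ p.1 ∧ p.2 = 0) ∨ (p.1 = 0 ∧ 0 ≤ p.2)}

/-- The `κ`-enlargement `B^κ = {x ∈ [0,∞)² : inf_{y ∈ B} ‖x−y‖ < κ}` (Euclidean norm). -/
def enlarge (B : Set (ℝ × ℝ)) (κ : ℝ) : Set (ℝ × ℝ) :=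
  {x | x ∈ Q ∧ ∃ y ∈ B, Real.sqrt ((x.1 - y.1) ^ 2 + (x.2 - y.2) ^ 2) < κ}

/-- `w_ϑ = sup {x ≥ 0 : ϑ_+([x,∞)×[0,∞)) > 0}` for a `K`-tuple `ϑ` of measures on `[0,∞)²`. -/
def wMeas {K : ℕ} (ϑ : Fin K → MeasureTheory.Measure (ℝ × ℝ)) : ℝ :=
  sSup {x : ℝ | 0 ≤ x ∧ 0 < ∑ k, ϑ k (Set.Ici x ×ˢ Set.Ici (0:ℝ))}

/-- Membership in the set `I` of admissible initial measures: each `ϑ k` is a finite Borel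
measure on `[0,∞)²`; (I.1) the superposition charges no corner set `C_x`, `x ∈ [0,∞)²`;
(I.2) `w_ϑ < ∞`; (I.3) `max_k G_k(w_ϑ − ε) > 0` for every `ε > 0`. -/
def MemI {K : ℕ} (D : Data K) (ϑ : Fin K → MeasureTheory.Measure (ℝ × ℝ)) : Prop :=
  (∀ k, IsFiniteMeasure (ϑ k)) ∧
  (∀ k, ϑ k Qᶜ = 0) ∧
  (∀ x ∈ Q, (∑ k, ϑ k (shift Cset x)) = 0) ∧
  BddAbove {x : ℝ | 0 ≤ x ∧ 0 < ∑ k, ϑ k (Set.Ici x ×ˢ Set.Ici (0:ℝ))} ∧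
  (∀ ε : ℝ, 0 < ε → ∃ k, 0 < Gk (D.Γ k) (wMeas ϑ - ε))

/-- `δ⁺_w`: the Dirac measure at `w` if `w > 0`, and the zero measure otherwise. -/
def deltaPlus (w : ℝ) : MeasureTheory.Measure ℝ :=
  if 0 < w then MeasureTheory.Measure.dirac w else 0

instance (w : ℝ) : SFinite (deltaPlus w) := by
  unfold deltaPlus; split_ifs <;> infer_instance

/-- `(δ⁺_w × Γ)(B)`, as a real number. -/
def kern (Γ : MeasureTheory.Measure ℝ) (w : ℝ) (B : Set (ℝ × ℝ)) : ℝ :=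
  (((deltaPlus w).prod Γ) B).toReal

/-- A (measure-valued) fluid model solution with initial measure `ϑ`: a family
`ζ(t) = (ζ_1(t),…,ζ_K(t))` of finite Borel measures on `[0,∞)²` with `ζ(0) = ϑ` satisfying
`ζ_k(t)(B) = ϑ_k(B_t) + λ_k ∫_0^t (δ⁺_{w(s)} × Γ_k)(B_{t−s}) ds` for every Borel
`B ⊆ [0,∞)²` and `t ≥ 0`, where `w` is the (unique) workload fluid model solution with
`w(0) = w_ϑ`. -/
def IsFluidSol {K : ℕ} (D : Data K) (ϑ : Fin K → MeasureTheory.Measure (ℝ × ℝ))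
    (ζ : ℝ → Fin K → MeasureTheory.Measure (ℝ × ℝ)) : Prop :=
  ∃ w : ℝ → ℝ, IsWorkloadSol D w ∧ w 0 = wMeas ϑ ∧
    (∀ t : ℝ, 0 ≤ t → ∀ k, IsFiniteMeasure (ζ t k) ∧ ζ t k Qᶜ = 0) ∧
    (∀ k, ζ 0 k = ϑ k) ∧
    (∀ k, ∀ B : Set (ℝ × ℝ), B ⊆ Q → MeasurableSet B → ∀ t : ℝ, 0 ≤ t →
      IntervalIntegrable (fun s => kern (D.Γ k) (w s) (shiftd B (t - s))) volume 0 t ∧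
      ζ t k B = ϑ k (shiftd B t) +
        ENNReal.ofReal (D.lam k * ∫ s in (0:ℝ)..t, kern (D.Γ k) (w s) (shiftd B (t - s))))

/-- The candidate invariant state `θ^w`:
`θ^w_k(B) = λ_k ∫_0^w Γ_k({p ≥ u : (w−u, p−u) ∈ B}) du`. -/
def thetaW {K : ℕ} (D : Data K) (w : ℝ) (k : Fin K) : MeasureTheory.Measure (ℝ × ℝ) :=
  ENNReal.ofReal (D.lam k) •
    MeasureTheory.Measure.map (fun up : ℝ × ℝ => (w - up.1, up.2 - up.1))
      ((((MeasureTheory.volume.restrict (Set.Ioo (0:ℝ) w))).prod (D.Γ k)).restrict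
        {up : ℝ × ℝ | up.1 ≤ up.2})

lemma Gk_nonneg (Γ : Measure ℝ) (x : ℝ) : 0 ≤ Gk Γ x :=
  ENNReal.toReal_nonneg

lemma Gk_le_one (Γ : Measure ℝ) [IsProbabilityMeasure Γ] (x : ℝ) : Gk Γ x ≤ 1 :=
  ENNReal.toReal_le_of_le_ofReal zero_le_one (by simpa using prob_le_one)

lemma Gk_antitone (Γ : Measure ℝ) [IsFiniteMeasure Γ] : Antitone (Gk Γ) := fun _ _ huv =>
  ENNReal.toReal_mono (measure_ne_top _ _) (measure_mono (Ioi_subset_Ioi huv))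

lemma Data.rho_pos {K : ℕ} (D : Data K) (k : Fin K) : 0 < D.rho k :=
  div_pos (D.lam_pos k) (D.mu_pos k)

lemma Data.one_lt_rhoTot {K : ℕ} (D : Data K) : 1 < D.rhoTot :=
  D.rho_gt_one

lemma Data.sum_rho_mul_integral_nonneg {K : ℕ} (D : Data K) (f : ℝ → ℝ) {p q : ℝ}
    (hpq : p ≤ q) : 0 ≤ ∑ k, D.rho k * ∫ s in p..q, Gk (D.Γ k) (f s) :=
  Finset.sum_nonneg fun k _ => mul_nonneg (D.rho_pos k).le
    (intervalIntegral.integral_nonneg hpq fun _ _ => Gk_nonneg _ _)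

lemma measurableSet_Q : MeasurableSet Q :=
  ((isClosed_le continuous_const continuous_fst).inter
    (isClosed_le continuous_const continuous_snd)).measurableSet

lemma measurableSet_Cset : MeasurableSet Cset :=
  (((isClosed_le continuous_const continuous_fst).inter
    (isClosed_eq continuous_snd continuous_const)).union
    ((isClosed_eq continuous_fst continuous_const).inter
    (isClosed_le continuous_const continuous_snd))).measurableSet

lemma measurableSet_shift {B : Set (ℝ × ℝ)} (hB : MeasurableSet B) (x : ℝ × ℝ) :
    MeasurableSet (shift B x) :=
  measurableSet_Q.inter (hB.preimage (by fun_prop))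

lemma shiftd_shift_subset (B : Set (ℝ × ℝ)) (x : ℝ × ℝ) (t : ℝ) :
    shiftd (shift B x) t ⊆ shift B (x.1 + t, x.2 + t) := by
  rintro y ⟨hyQ, -, hy⟩
  refine ⟨hyQ, ?_⟩
  convert hy using 2 <;> simp only <;> ring

/-- Off the vertical edge of the corner, `{w} × ℝ` meets it in one point, which `Γ` does not
charge. -/
lemma kern_shiftd_shift_Cset_eq_zero (Γ : Measure ℝ) [SFinite Γ] (hΓ : ∀ x : ℝ, Γ {x} = 0)
    {w r : ℝ} {x : ℝ × ℝ} (h : w ≠ r + x.1) :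
    kern Γ w (shiftd (shift Cset x) r) = 0 := by
  unfold kern deltaPlus
  split_ifs with hw
  · rw [Measure.dirac_prod, (measurableEmbedding_prodMk_left w).map_apply]
    refine ENNReal.toReal_eq_zero_iff _ |>.2 (Or.inl (measure_mono_null ?_ (hΓ (r + x.2))))
    rintro p ⟨-, -, ⟨-, hp⟩ | ⟨hw', -⟩⟩
    · simp only [mem_singleton_iff]; linarith
    · exact absurd (by simp only at hw'; linarith) h
  · simp [Measure.zero_prod]

namespace IsWorkloadSol

variable {K : ℕ} {D : Data K} {w : ℝ → ℝ}

lemma intervalIntegrable (hw : IsWorkloadSol D w) (k : Fin K) {p q : ℝ} (hp : 0 ≤ p)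
    (hq : 0 ≤ q) : IntervalIntegrable (fun s => Gk (D.Γ k) (w s)) volume p q :=
  (hw.2.1 k p hp).symm.trans (hw.2.1 k q hq)

lemma add_sub_add_eq_sum (hw : IsWorkloadSol D w) {p q : ℝ} (hp : 0 ≤ p) (hq : 0 ≤ q) :
    w q + q - (w p + p) = ∑ k, D.rho k * ∫ s in p..q, Gk (D.Γ k) (w s) := by
  have hdiff : ∀ k, (∫ s in (0:ℝ)..q, Gk (D.Γ k) (w s)) - ∫ s in (0:ℝ)..p, Gk (D.Γ k) (w s) =
      ∫ s in p..q, Gk (D.Γ k) (w s) := fun k =>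
    intervalIntegral.integral_interval_sub_left (hw.2.1 k q hq) (hw.2.1 k p hp)
  rw [hw.2.2 q hq, hw.2.2 p hp]
  simp only [← hdiff, mul_sub, Finset.sum_sub_distrib]
  ring

lemma sum_integral_le (hw : IsWorkloadSol D w) {p q : ℝ} (hp : 0 ≤ p) (hpq : p ≤ q) :
    ∑ k, D.rho k * ∫ s in p..q, Gk (D.Γ k) (w s) ≤ D.rhoTot * (q - p) := by
  rw [Data.rhoTot, Finset.sum_mul]
  refine Finset.sum_le_sum fun k _ => mul_le_mul_of_nonneg_left ?_ (D.rho_pos k).le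
  calc ∫ s in p..q, Gk (D.Γ k) (w s) ≤ ∫ _ in p..q, (1 : ℝ) :=
        intervalIntegral.integral_mono_on hpq (hw.intervalIntegrable k hp (hp.trans hpq))
          intervalIntegrable_const fun _ _ => Gk_le_one _ _
    _ = q - p := by simp

lemma monotoneOn_add_id (hw : IsWorkloadSol D w) : MonotoneOn (fun s => w s + s) (Ici 0) :=
  fun _ hp _ hq hpq => sub_nonneg.1 <| (hw.add_sub_add_eq_sum hp hq).symm ▸
    D.sum_rho_mul_integral_nonneg w hpq

lemma abs_sub_le_rhoTot_mul (hw : IsWorkloadSol D w) {p q : ℝ} (hp : 0 ≤ p) (hpq : p ≤ q) :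
    |w q - w p| ≤ D.rhoTot * (q - p) := by
  have h := hw.add_sub_add_eq_sum hp (hp.trans hpq)
  have hlo := D.sum_rho_mul_integral_nonneg w hpq
  have hhi := hw.sum_integral_le hp hpq
  have hρ := D.one_lt_rhoTot
  rw [abs_le]
  constructor <;> nlinarith

lemma continuousOn (hw : IsWorkloadSol D w) : ContinuousOn w (Ici 0) := by
  refine (LipschitzOnWith.of_dist_le_mul (K := D.rhoTot.toNNReal) ?_).continuousOn
  intro p hp q hq
  rw [Real.dist_eq, Real.dist_eq, Real.coe_toNNReal _ (zero_le_one.trans D.one_lt_rhoTot.le)]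
  rcases le_total p q with hpq | hqp
  · rw [abs_sub_comm (w p), abs_sub_comm p, abs_of_nonneg (sub_nonneg.2 hpq)]
    exact hw.abs_sub_le_rhoTot_mul hp hpq
  · rw [abs_of_nonneg (sub_nonneg.2 hqp)]
    exact hw.abs_sub_le_rhoTot_mul hq hqp

/-- Above a level at which every `G_k` vanishes the workload decreases at unit rate, so it
cannot cross that level upwards. -/
lemma le_of_forall_Gk_eq_zero (hw : IsWorkloadSol D w) {v : ℝ} (hv : ∀ k, Gk (D.Γ k) v = 0)
    (h0 : w 0 ≤ v) {s : ℝ} (hs : 0 ≤ s) : w s ≤ v := by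
  by_contra! hvs
  set E := Icc 0 s ∩ w ⁻¹' Iic v
  have hEbdd : BddAbove E := ⟨s, fun _ hu => hu.1.2⟩
  have hτ : sSup E ∈ E :=
    ((hw.continuousOn.mono Icc_subset_Ici_self).preimage_isClosed_of_isClosed isClosed_Icc
      isClosed_Iic).csSup_mem ⟨0, ⟨le_rfl, hs⟩, h0⟩ hEbdd
  set τ := sSup E
  have hτs : τ < s := hτ.1.2.lt_of_ne fun h => (h ▸ hvs).not_ge hτ.2
  have hG : ∀ u ∈ Ioc τ s, ∀ k, Gk (D.Γ k) (w u) = 0 := by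
    intro u hu k
    have hwu : v < w u := by
      by_contra! h
      exact hu.1.not_ge (le_csSup hEbdd ⟨⟨hτ.1.1.trans hu.1.le, hu.2⟩, h⟩)
    exact le_antisymm (hv k ▸ Gk_antitone _ hwu.le) (Gk_nonneg _ _)
  have hflat := hw.add_sub_add_eq_sum hτ.1.1 hs
  rw [Finset.sum_eq_zero fun k _ => by
    rw [intervalIntegral.integral_zero_ae (Eventually.of_forall fun u hu =>
      hG u (by rwa [uIoc_of_le hτs.le] at hu) k), mul_zero]] at hflat
  have hwτ : w τ ≤ v := hτ.2
  linarith

lemma volume_setOf_add_eq (hw : IsWorkloadSol D w)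
    (hI3 : ∀ ε : ℝ, 0 < ε → ∃ k, 0 < Gk (D.Γ k) (w 0 - ε)) (c : ℝ) :
    volume {s | 0 ≤ s ∧ w s + s = c} = 0 := by
  by_contra hS
  obtain ⟨a, ha, b, hb, hab⟩ :=
    (Set.not_subsingleton_iff.1 fun h => hS (h.measure_zero _)).exists_lt
  have hG : ∀ᵐ s ∂volume.restrict (Ioc a b), ∀ k, Gk (D.Γ k) (w s) = 0 := by
    have hsum : ∑ k, D.rho k * ∫ s in a..b, Gk (D.Γ k) (w s) = 0 := by
      rw [← hw.add_sub_add_eq_sum ha.1 hb.1, ha.2, hb.2, sub_self]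
    rw [ae_all_iff]
    intro k
    have hk := (Finset.sum_eq_zero_iff_of_nonneg fun k _ => mul_nonneg (D.rho_pos k).le
      (intervalIntegral.integral_nonneg hab.le fun _ _ => Gk_nonneg _ _)).1 hsum k
      (Finset.mem_univ k)
    exact (intervalIntegral.integral_eq_zero_iff_of_le_of_nonneg_ae hab.le
      (Eventually.of_forall fun _ => Gk_nonneg _ _) (hw.intervalIntegrable k ha.1 hb.1)).1
      ((mul_eq_zero.1 hk).resolve_left (D.rho_pos k).ne')
  have : (ae (volume.restrict (Ioc a b))).NeBot := ae_restrict_neBot.2 (by simp [hab])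
  obtain ⟨u, hGu, hu⟩ := (hG.and (ae_restrict_mem measurableSet_Ioc)).exists
  have hwu : w u < w a := by
    have h1 := hw.monotoneOn_add_id ha.1 (ha.1.trans hu.1.le) hu.1.le
    have h2 := hw.monotoneOn_add_id (ha.1.trans hu.1.le) hb.1 hu.2
    linarith [ha.2, hb.2, hu.1]
  have h0 : w 0 ≤ w u := by
    by_contra! h
    obtain ⟨k, hk⟩ := hI3 _ (sub_pos.2 h)
    rw [sub_sub_cancel, hGu k] at hk
    exact hk.false
  exact hwu.not_ge (hw.le_of_forall_Gk_eq_zero hGu h0 ha.1)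

end IsWorkloadSol

/-- For `ϑ ∈ I` and the fluid model solution `ζ` with initial measure `ϑ`,
`ζ_+(t)(C_x) = 0` for all `x ∈ [0,∞)²` and all `t ≥ 0`. -/
theorem fluid_no_corner_mass {K : ℕ} (D : Data K)
    (ϑ : Fin K → MeasureTheory.Measure (ℝ × ℝ)) (hϑ : MemI D ϑ)
    (ζ : ℝ → Fin K → MeasureTheory.Measure (ℝ × ℝ)) (hζ : IsFluidSol D ϑ ζ) :
    ∀ t : ℝ, 0 ≤ t → ∀ x ∈ Q, (∑ k, ζ t k (shift Cset x)) = 0 := by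
  obtain ⟨w, hw, hw0, -, -, hζeq⟩ := hζ
  intro t ht x hx
  have hnull := hw.volume_setOf_add_eq (hw0 ▸ hϑ.2.2.2.2) (t + x.1)
  refine Finset.sum_eq_zero fun k _ => ?_
  have hinit : ϑ k (shiftd (shift Cset x) t) = 0 :=
    measure_mono_null (shiftd_shift_subset Cset x t) <| Finset.sum_eq_zero_iff.1
      (hϑ.2.2.1 _ ⟨add_nonneg hx.1 ht, add_nonneg hx.2 ht⟩) k (Finset.mem_univ k)
  have hflow : ∫ s in (0:ℝ)..t, kern (D.Γ k) (w s) (shiftd (shift Cset x) (t - s)) = 0 := by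
    refine intervalIntegral.integral_zero_ae ?_
    filter_upwards [measure_eq_zero_iff_ae_notMem.1 hnull] with s hs hst
    refine kern_shiftd_shift_Cset_eq_zero _ (D.Γ_noAtom k) fun h => hs ⟨?_, by linarith⟩
    exact (uIoc_of_le ht ▸ hst).1.le
  rw [(hζeq k _ (fun _ hy => hy.1) (measurableSet_shift measurableSet_Cset x) t ht).2, hinit,
    hflow, mul_zero, ENNReal.ofReal_zero, add_zero]

end OverloadedFIFO
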